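/- Let N ≥ 2 be an integer, p > N, α > 0, and define f(t) = |t|^{p−2} t · max(sin t, 0) · φ_N(α|t|^{N/(N−1)}) and H̃(t) = t·f(t) − N·∫₀^t f(s) ds. Then for t_k = 2kπ with k a positive integer, H̃(t_k) < 0 and H̃(t_k) > H̃(t_{k+1}); in particular f does not satisfy the Ambrosetti–Rabinowitz condition (there is no θ > N and R > 0 with 0 < θ∫₀^t f ≤ t f(t) for all t ≥ R). -/

import Mathlib

/-! On `[0, ∞)` the nonlinearity `f` is nonnegative, vanishes at every `2kπ` and is positive
somewhere in each period. Hence `F(t) = ∫₀ᵗ f` is positive and strictly increasing along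
`t_k = 2kπ`, while `H̃(t_k) = -N F(t_k)` because `f(t_k) = 0`. The same vanishing refutes the
Ambrosetti–Rabinowitz inequality `θ F(t) ≤ t f(t)` at every `t_k`. -/

open Real

/-- φ_N(t) = e^t − Σ_{j=0}^{N−2} t^j/j! -/
noncomputable def phiN (N : ℕ) (t : ℝ) : ℝ :=
  Real.exp t - ∑ j ∈ Finset.range (N - 1), t ^ j / (Nat.factorial j : ℝ)

/-- f(t) = |t|^{p−2} t (sin t)₊ φ_N(α|t|^{N/(N−1)}) -/
noncomputable def fsin (N : ℕ) (p α : ℝ) (t : ℝ) : ℝ :=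
  |t| ^ (p - 2) * t * max (Real.sin t) 0 * phiN N (α * |t| ^ ((N:ℝ)/((N:ℝ)-1)))

/-- H̃(t) = t f(t) − N ∫₀^t f(s) ds -/
noncomputable def Htilde (N : ℕ) (p α : ℝ) (t : ℝ) : ℝ :=
  t * fsin N p α t - (N:ℝ) * ∫ s in (0:ℝ)..t, fsin N p α s

lemma phiN_nonneg (N : ℕ) {s : ℝ} (hs : 0 ≤ s) : 0 ≤ phiN N s :=
  sub_nonneg.mpr (Real.sum_le_exp_of_nonneg hs _)

lemma phiN_pos (N : ℕ) {s : ℝ} (hs : 0 < s) : 0 < phiN N s := by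
  have hlt : ∑ j ∈ Finset.range (N - 1), s ^ j / (j.factorial : ℝ)
      < ∑ j ∈ Finset.range (N - 1 + 1), s ^ j / (j.factorial : ℝ) := by
    rw [Finset.sum_range_succ]
    exact lt_add_of_pos_right _ (by positivity)
  exact sub_pos.mpr (hlt.trans_le (Real.sum_le_exp_of_nonneg hs.le _))

lemma continuous_phiN (N : ℕ) : Continuous (phiN N) :=
  Real.continuous_exp.sub (continuous_finsetSum _ fun j _ => (continuous_pow j).div_const _)

lemma natCast_div_natCast_sub_one_nonneg (N : ℕ) : 0 ≤ (N : ℝ) / ((N : ℝ) - 1) := by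
  rcases Nat.eq_zero_or_pos N with rfl | hN
  · simp
  · exact div_nonneg (Nat.cast_nonneg N) (sub_nonneg.mpr (Nat.one_le_cast.mpr hN))

lemma continuous_fsin (N : ℕ) {p : ℝ} (hp : 2 ≤ p) (α : ℝ) : Continuous (fsin N p α) := by
  have hpow : Continuous fun t : ℝ => |t| ^ (p - 2) :=
    continuous_abs.rpow_const fun _ => Or.inr (sub_nonneg.mpr hp)
  have harg : Continuous fun t : ℝ => α * |t| ^ ((N : ℝ) / ((N : ℝ) - 1)) :=
    continuous_const.mul (continuous_abs.rpow_const fun _ => Or.inr (natCast_div_natCast_sub_one_nonneg N))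
  exact ((hpow.mul continuous_id).mul (Real.continuous_sin.max continuous_const)).mul
    ((continuous_phiN N).comp harg)

lemma fsin_nonneg (N : ℕ) (p : ℝ) {α t : ℝ} (hα : 0 ≤ α) (ht : 0 ≤ t) : 0 ≤ fsin N p α t := by
  have hφ := phiN_nonneg N (s := α * |t| ^ ((N : ℝ) / ((N : ℝ) - 1))) (by positivity)
  unfold fsin
  positivity

lemma fsin_pos (N : ℕ) (p : ℝ) {α t : ℝ} (hα : 0 < α) (ht : 0 < t) (hsin : 0 < sin t) :
    0 < fsin N p α t := by
  have hφ := phiN_pos N (s := α * |t| ^ ((N : ℝ) / ((N : ℝ) - 1)))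
    (mul_pos hα (Real.rpow_pos_of_pos (abs_pos.mpr ht.ne') _))
  have hmax : 0 < max (sin t) 0 := lt_max_of_lt_left hsin
  have hpow := Real.rpow_pos_of_pos (abs_pos.mpr ht.ne') (p - 2)
  unfold fsin
  positivity

lemma fsin_eq_zero_of_sin_eq_zero (N : ℕ) (p α : ℝ) {t : ℝ} (h : sin t = 0) :
    fsin N p α t = 0 := by
  simp [fsin, h]

lemma fsin_two_nat_mul_pi (N : ℕ) (p α : ℝ) (k : ℕ) : fsin N p α (2 * k * π) = 0 :=
  fsin_eq_zero_of_sin_eq_zero N p α (by exact_mod_cast Real.sin_nat_mul_pi (2 * k))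

lemma Htilde_two_nat_mul_pi (N : ℕ) (p α : ℝ) (k : ℕ) :
    Htilde N p α (2 * k * π) = -(N : ℝ) * ∫ s in (0 : ℝ)..2 * k * π, fsin N p α s := by
  rw [Htilde, fsin_two_nat_mul_pi]
  ring

-- `f` is positive at `2kπ + π/2`, where `sin = 1`.
lemma integral_fsin_period_pos (N : ℕ) {p α : ℝ} (hp : 2 ≤ p) (hα : 0 < α) (k : ℕ) :
    0 < ∫ s in (2 * k * π)..2 * (k + 1) * π, fsin N p α s := by
  have hcont := continuous_fsin N hp α
  have hk : (0 : ℝ) ≤ 2 * k * π := by positivity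
  have hsin : sin (2 * k * π + π / 2) = 1 := by
    rw [show 2 * k * π + π / 2 = π / 2 + k * (2 * π) by ring, Real.sin_add_nat_mul_two_pi,
      Real.sin_pi_div_two]
  simpa using intervalIntegral.integral_lt_integral_of_continuousOn_of_le_of_exists_lt
    (f := fun _ => 0) (by nlinarith [Real.pi_pos]) continuousOn_const hcont.continuousOn
    (fun x hx => fsin_nonneg N p hα.le (hk.trans hx.1.le))
    ⟨2 * k * π + π / 2, ⟨by linarith [Real.pi_pos], by linarith [Real.pi_pos]⟩,
      fsin_pos N p hα (by positivity) (by rw [hsin]; exact one_pos)⟩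

lemma strictMono_integral_fsin_two_nat_mul_pi (N : ℕ) {p α : ℝ} (hp : 2 ≤ p) (hα : 0 < α) :
    StrictMono fun k : ℕ => ∫ s in (0 : ℝ)..2 * k * π, fsin N p α s := by
  refine strictMono_nat_of_lt_succ fun k => ?_
  have hint := (continuous_fsin N hp α).intervalIntegrable (μ := MeasureTheory.volume)
  have hdiff := intervalIntegral.integral_interval_sub_left (hint 0 (2 * (k + 1 : ℕ) * π))
    (hint 0 (2 * k * π))
  push_cast at hdiff ⊢
  linarith [integral_fsin_period_pos N hp hα k]

/-- for t_k = 2kπ, H̃(t_k) < 0 and H̃(t_k) > H̃(t_{k+1}); in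
particular f does not satisfy the Ambrosetti–Rabinowitz condition. -/
theorem stmt_19 (N : ℕ) (hN : 2 ≤ N) (p α : ℝ) (hp : (N:ℝ) < p) (hα : 0 < α) :
    (∀ k : ℕ, 0 < k →
      Htilde N p α (2 * (k:ℝ) * π) < 0 ∧
      Htilde N p α (2 * ((k:ℝ) + 1) * π) < Htilde N p α (2 * (k:ℝ) * π)) ∧
    ¬ ∃ θ R : ℝ, (N:ℝ) < θ ∧ 0 < R ∧
      ∀ t : ℝ, R ≤ t →
        0 < θ * (∫ s in (0:ℝ)..t, fsin N p α s) ∧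
        θ * (∫ s in (0:ℝ)..t, fsin N p α s) ≤ t * fsin N p α t := by
  have hp2 : (2 : ℝ) ≤ p := le_trans (by exact_mod_cast hN) hp.le
  have hN0 : (0 : ℝ) < N := by positivity
  have hmono := strictMono_integral_fsin_two_nat_mul_pi N hp2 hα
  have hzero : (∫ s in (0 : ℝ)..2 * (0 : ℕ) * π, fsin N p α s) = 0 := by simp
  refine ⟨fun k hk => ?_, ?_⟩
  · have hsucc := Htilde_two_nat_mul_pi N p α (k + 1)
    push_cast at hsucc
    rw [hsucc, Htilde_two_nat_mul_pi]
    have hpos := hmono hk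
    have hstep := hmono k.lt_succ_self
    simp only [hzero] at hpos
    push_cast at hstep
    constructor <;> nlinarith
  · rintro ⟨θ, R, -, -, hAR⟩
    obtain ⟨k, hk⟩ := exists_nat_ge R
    have hRk : R ≤ 2 * k * π := by nlinarith [Real.pi_gt_three, Nat.cast_nonneg (α := ℝ) k]
    obtain ⟨hpos, hle⟩ := hAR _ hRk
    rw [fsin_two_nat_mul_pi, mul_zero] at hle
    exact hle.not_gt hpos
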